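/- Let r ≥ 8 be an even integer. Then every (r,r+1;6)-balanced biregular graph has order at least 2(r²+4), i.e., n_bb(r,r+1;6) ≥ 2r² + 8. -/

import Mathlib

open SimpleGraph Set

/-- The degree of a vertex, via the natural cardinality of its neighbor set. -/
noncomputable def deg {V : Type*} (G : SimpleGraph V) (v : V) : ℕ :=
  (G.neighborSet v).ncard

/-- Number of edges both of whose endpoints have degree `d`. -/
noncomputable def edgeCountDeg {V : Type*} (G : SimpleGraph V) (d : ℕ) : ℕ :=
  {e ∈ G.edgeSet | ∀ v ∈ e, deg G v = d}.ncard

/-- An `(r,s;g)`-balanced biregular graph: girth `g`, degree set exactly `{r, s}`,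
and equally many vertices of degree `r` as of degree `s`. -/
def IsBabi {V : Type*} (r s g : ℕ) (G : SimpleGraph V) : Prop :=
  G.girth = g ∧ (∀ v, deg G v = r ∨ deg G v = s) ∧
  (∃ v, deg G v = r) ∧ (∃ v, deg G v = s) ∧
  {v | deg G v = r}.ncard = {v | deg G v = s}.ncard

/-!
Let `R` be the set of thin vertices (degree `r`) and `k = #R = n / 2`. Counting degrees, `k` is
even, so `n < 2r² + 8` would give `k ≤ r² + 2`. Double counting the edges between the two degree
classes gives `p = q + k`, where `p` and `q` are the degree sums of the subgraphs induced by the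
fat and by the thin vertices. The Moore tree of depth two rooted at a fat edge `uv` has
`2r² + a` vertices, `a` the number of fat neighbours of `u` and `v`, so `a ≤ 4`; by
Cauchy–Schwarz this bounds `p ≤ 2k`, hence `q ≤ k`. But the `2r + 2 - a` thin vertices of the
first layer of that tree have `r - 1` children each, and each child is either fat (at most `k - a`
of them) or joined to its parent by a thin edge (at most `q / 2` of them). Hence
`2(r - 1)(2r + 2 - a) + 2a ≤ q + 2k ≤ 3r² + 6`, which fails for `r ≥ 8`.
-/

open Finset

lemma Finset.card_inter_add_card_inter_compl {α : Type*} [Fintype α] [DecidableEq α]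
    (s t : Finset α) : #(s ∩ t) + #(s ∩ tᶜ) = #s := by
  rw [← Finset.sdiff_eq_inter_compl, Finset.card_inter_add_card_sdiff]

namespace SimpleGraph

variable {V : Type*} {G : SimpleGraph V}

lemma egirth_eq_of_girth_eq {n : ℕ} (hn : n ≠ 0) (h : G.girth = n) : G.egirth = n := by
  have hfin : G.egirth ≠ ⊤ := fun htop => hn (by simp [← h, girth, htop])
  rw [← h, girth, ENat.natCast_toNat hfin]

lemma not_adj_of_four_le_egirth (hg : 4 ≤ G.egirth) {a b c : V} (hab : G.Adj a b)
    (hbc : G.Adj b c) : ¬ G.Adj c a := fun hca => by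
  have hcyc : (Walk.cons hab (Walk.cons hbc (Walk.cons hca Walk.nil))).IsCycle := by
    simp [Walk.isCycle_def, Walk.isTrail_def]
    aesop
  exact absurd (le_egirth.mp hg _ _ hcyc) (by norm_num)

lemma not_adj_of_five_le_egirth (hg : 5 ≤ G.egirth) {a b c d : V} (hab : G.Adj a b)
    (hbc : G.Adj b c) (hcd : G.Adj c d) (hac : a ≠ c) (hbd : b ≠ d) : ¬ G.Adj d a := fun hda => by
  have hcyc : (Walk.cons hab (Walk.cons hbc (Walk.cons hcd (Walk.cons hda Walk.nil)))).IsCycle := by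
    simp [Walk.isCycle_def, Walk.isTrail_def]
    aesop
  exact absurd (le_egirth.mp hg _ _ hcyc) (by norm_num)

lemma not_adj_of_six_le_egirth (hg : 6 ≤ G.egirth) {a b c d e : V} (hab : G.Adj a b)
    (hbc : G.Adj b c) (hcd : G.Adj c d) (hde : G.Adj d e) (hac : a ≠ c) (had : a ≠ d)
    (hbd : b ≠ d) (hbe : b ≠ e) (hce : c ≠ e) : ¬ G.Adj e a := fun hea => by
  have hcyc : (Walk.cons hab (Walk.cons hbc (Walk.cons hcd (Walk.cons hde
      (Walk.cons hea Walk.nil))))).IsCycle := by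
    simp [Walk.isCycle_def, Walk.isTrail_def]
    aesop
  exact absurd (le_egirth.mp hg _ _ hcyc) (by norm_num)

section Finite

variable [Fintype V] [DecidableEq V] [DecidableRel G.Adj]

lemma sum_sum_neighborFinset_inter {M : Type*} [AddCommMonoid M] (A B : Finset V)
    (f : V → M) :
    ∑ v ∈ A, ∑ w ∈ G.neighborFinset v ∩ B, f w = ∑ w ∈ B, #(G.neighborFinset w ∩ A) • f w := by
  have hAbove : ∀ v, G.neighborFinset v ∩ B = B.bipartiteAbove G.Adj v := fun v => by
    ext; simp [bipartiteAbove, and_comm]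
  have hBelow : ∀ w, G.neighborFinset w ∩ A = A.bipartiteBelow G.Adj w := fun w => by
    ext; simp [bipartiteBelow, and_comm, adj_comm]
  simp_rw [hAbove, hBelow, ← sum_const]
  exact sum_sum_bipartiteAbove_eq_sum_sum_bipartiteBelow G.Adj fun _ w => f w

lemma sum_card_neighborFinset_inter_comm (A B : Finset V) :
    ∑ v ∈ A, #(G.neighborFinset v ∩ B) = ∑ w ∈ B, #(G.neighborFinset w ∩ A) := by
  simpa only [sum_const, smul_eq_mul, mul_one] using
    sum_sum_neighborFinset_inter (G := G) (M := ℕ) A B fun _ => 1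

lemma card_neighborFinset_inter_add_card_inter_compl (v : V) (R : Finset V) :
    #(G.neighborFinset v ∩ R) + #(G.neighborFinset v ∩ Rᶜ) = G.degree v := by
  rw [card_inter_add_card_inter_compl, card_neighborFinset_eq_degree]

lemma sum_degree_compl_add_sum_card_neighborFinset_inter (R : Finset V) :
    ∑ v ∈ Rᶜ, G.degree v + ∑ v ∈ R, #(G.neighborFinset v ∩ R) =
      ∑ v ∈ R, G.degree v + ∑ v ∈ Rᶜ, #(G.neighborFinset v ∩ Rᶜ) := by
  simp only [← card_neighborFinset_inter_add_card_inter_compl _ R, sum_add_distrib,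
    sum_card_neighborFinset_inter_comm Rᶜ R]
  ring

lemma two_mul_sum_card_neighborFinset_inter_le_of_disjoint {A Y Z : Finset V} (hY : Y ⊆ A)
    (hZ : Z ⊆ A) (hYZ : Disjoint Y Z) :
    2 * ∑ v ∈ Y, #(G.neighborFinset v ∩ Z) ≤ ∑ v ∈ A, #(G.neighborFinset v ∩ A) :=
  calc 2 * ∑ v ∈ Y, #(G.neighborFinset v ∩ Z)
      = ∑ v ∈ Y, #(G.neighborFinset v ∩ Z) + ∑ v ∈ Z, #(G.neighborFinset v ∩ Y) := by
        rw [sum_card_neighborFinset_inter_comm Z Y]; ring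
    _ ≤ ∑ v ∈ Y, #(G.neighborFinset v ∩ A) + ∑ v ∈ Z, #(G.neighborFinset v ∩ A) := by
        gcongr
    _ = ∑ v ∈ Y ∪ Z, #(G.neighborFinset v ∩ A) := (sum_union hYZ).symm
    _ ≤ ∑ v ∈ A, #(G.neighborFinset v ∩ A) := sum_le_sum_of_subset (union_subset hY hZ)

-- With `d` the degree in `G[A]`: `2 ∑ d² = ∑_{vw} (d v + d w) ≤ c ∑ d` over the darts `vw`
-- of `G[A]`, and `(∑ d)² ≤ #A ∑ d²` by Cauchy–Schwarz.
lemma two_mul_sum_card_neighborFinset_inter_le (A : Finset V) (c : ℕ)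
    (h : ∀ v ∈ A, ∀ w ∈ A, G.Adj v w →
      #(G.neighborFinset v ∩ A) + #(G.neighborFinset w ∩ A) ≤ c) :
    2 * ∑ v ∈ A, #(G.neighborFinset v ∩ A) ≤ c * #A := by
  set d : V → ℕ := fun v => #(G.neighborFinset v ∩ A)
  set s := ∑ v ∈ A, d v
  have hsq : 2 * ∑ v ∈ A, d v ^ 2 ≤ c * s :=
    calc 2 * ∑ v ∈ A, d v ^ 2 = ∑ v ∈ A, ∑ w ∈ G.neighborFinset v ∩ A, (d v + d w) := by
          simp only [sum_add_distrib, sum_sum_neighborFinset_inter A A d, sum_const, smul_eq_mul, sq, d]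
          ring
      _ ≤ ∑ v ∈ A, ∑ w ∈ G.neighborFinset v ∩ A, c := by
          gcongr with v hv w hw
          rw [Finset.mem_inter, mem_neighborFinset] at hw
          exact h v hv w hw.2 hw.1
      _ = c * s := by simp [d, s, mul_sum, mul_comm]
  have hcs : s ^ 2 ≤ #A * ∑ v ∈ A, d v ^ 2 := sq_sum_le_card_mul_sum_sq
  rcases Nat.eq_zero_or_pos s with hs | hs
  · simp [hs]
  · exact Nat.le_of_mul_le_mul_right (by nlinarith) hs

-- In the Moore tree rooted at the edge `uv`, the first layer is `edgeNbhd u v \ {u, v}` and the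
-- children of a vertex `w` of that layer form `edgeChildren u v w`.
variable (G) in
def edgeNbhd (u v : V) : Finset V := G.neighborFinset u ∪ G.neighborFinset v

variable (G) in
def edgeChildren (u v w : V) : Finset V := G.neighborFinset w \ G.edgeNbhd u v

variable {u v w w' : V}

lemma edgeNbhd_comm : G.edgeNbhd u v = G.edgeNbhd v u := union_comm _ _

lemma edgeChildren_comm : G.edgeChildren u v w = G.edgeChildren v u w := by
  rw [edgeChildren, edgeChildren, edgeNbhd_comm]

lemma mem_edgeNbhd_sdiff_pair :
    w ∈ G.edgeNbhd u v \ {u, v} ↔ G.Adj u w ∧ w ≠ v ∨ G.Adj v w ∧ w ≠ u := by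
  simp only [edgeNbhd, Finset.mem_sdiff, Finset.mem_union, mem_neighborFinset,
    Finset.mem_insert, Finset.mem_singleton]
  constructor
  · tauto
  · rintro (⟨h, hwv⟩ | ⟨h, hwu⟩)
    · exact ⟨Or.inl h, by rintro (rfl | rfl) <;> simp_all⟩
    · exact ⟨Or.inr h, by rintro (rfl | rfl) <;> simp_all⟩

lemma card_edgeNbhd_inter (hg : 4 ≤ G.egirth) (huv : G.Adj u v) (P : Finset V) :
    #(G.edgeNbhd u v ∩ P) = #(G.neighborFinset u ∩ P) + #(G.neighborFinset v ∩ P) := by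
  rw [edgeNbhd, Finset.union_inter_distrib_right, card_union_of_disjoint]
  refine Finset.disjoint_left.mpr fun x hxu hxv => ?_
  simp only [Finset.mem_inter, mem_neighborFinset] at hxu hxv
  exact not_adj_of_four_le_egirth hg hxu.1 hxv.1.symm huv.symm

lemma card_edgeNbhd (hg : 4 ≤ G.egirth) (huv : G.Adj u v) :
    #(G.edgeNbhd u v) = G.degree u + G.degree v := by
  simpa using card_edgeNbhd_inter hg huv univ

lemma card_edgeNbhd_sdiff_inter_add_two (huv : G.Adj u v) {P : Finset V} (hu : u ∈ P)
    (hv : v ∈ P) : #((G.edgeNbhd u v \ {u, v}) ∩ P) + 2 = #(G.edgeNbhd u v ∩ P) := by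
  have hsub : {u, v} ⊆ G.edgeNbhd u v ∩ P := by
    simp [Finset.insert_subset_iff, edgeNbhd, hu, hv, huv, huv.symm]
  have hle := Finset.card_le_card hsub
  rw [Finset.sdiff_inter_right_comm, card_sdiff_of_subset hsub, card_pair huv.ne] at *
  omega

lemma neighborFinset_inter_edgeNbhd (hg : 5 ≤ G.egirth) (huv : G.Adj u v) (hw : G.Adj u w)
    (hwv : w ≠ v) : G.neighborFinset w ∩ G.edgeNbhd u v = {u} := by
  ext x
  simp only [edgeNbhd, Finset.mem_inter, Finset.mem_union, mem_neighborFinset,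
    Finset.mem_singleton]
  constructor
  · rintro ⟨hwx, hux | hvx⟩
    · exact absurd hux.symm (not_adj_of_four_le_egirth (le_trans (by norm_num) hg) hw hwx)
    · by_contra hxu
      exact not_adj_of_five_le_egirth hg hw hwx hvx.symm (Ne.symm hxu) hwv huv.symm
  · rintro rfl
    exact ⟨hw.symm, Or.inr huv.symm⟩

lemma card_edgeChildren_add_one_of_adj (hg : 5 ≤ G.egirth) (huv : G.Adj u v)
    (hw : G.Adj u w) (hwv : w ≠ v) : #(G.edgeChildren u v w) + 1 = G.degree w := by
  have := card_sdiff_add_card_inter (G.neighborFinset w) (G.edgeNbhd u v)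
  rwa [neighborFinset_inter_edgeNbhd hg huv hw hwv, Finset.card_singleton,
    card_neighborFinset_eq_degree] at this

lemma card_edgeChildren_add_one (hg : 5 ≤ G.egirth) (huv : G.Adj u v)
    (hw : w ∈ G.edgeNbhd u v \ {u, v}) : #(G.edgeChildren u v w) + 1 = G.degree w := by
  rcases mem_edgeNbhd_sdiff_pair.mp hw with ⟨huw, hwv⟩ | ⟨hvw, hwu⟩
  · exact card_edgeChildren_add_one_of_adj hg huv huw hwv
  · rw [edgeChildren_comm]
    exact card_edgeChildren_add_one_of_adj hg huv.symm hvw hwu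

-- A common child `x` of `w` and `w'` would close the 4-cycle `u w x w'` or the 5-cycle
-- `u w x w' v`.
lemma disjoint_edgeChildren_of_adj (hg : 6 ≤ G.egirth) (huv : G.Adj u v) (hw : G.Adj u w)
    (hwv : w ≠ v) (hw' : w' ∈ G.edgeNbhd u v \ {u, v}) (hww' : w ≠ w') :
    Disjoint (G.edgeChildren u v w) (G.edgeChildren u v w') := by
  refine Finset.disjoint_left.mpr fun x hx hx' => ?_
  simp only [edgeChildren, edgeNbhd, Finset.mem_sdiff, Finset.mem_union, mem_neighborFinset,
    not_or] at hx hx'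
  obtain ⟨hwx, hux, hvx⟩ := hx
  have hxu : u ≠ x := by rintro rfl; exact hvx huv.symm
  have hxv : x ≠ v := by rintro rfl; exact hux huv
  rcases mem_edgeNbhd_sdiff_pair.mp hw' with ⟨huw', -⟩ | ⟨hvw', hw'u⟩
  · exact not_adj_of_five_le_egirth (le_trans (by norm_num) hg) hw hwx hx'.1.symm hxu hww'
      huw'.symm
  · exact not_adj_of_six_le_egirth hg hw hwx hx'.1.symm hvw'.symm hxu (Ne.symm hw'u) hww' hwv
      hxv huv.symm

lemma pairwiseDisjoint_edgeChildren (hg : 6 ≤ G.egirth) (huv : G.Adj u v) :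
    (↑(G.edgeNbhd u v \ {u, v}) : Set V).PairwiseDisjoint (G.edgeChildren u v) := by
  intro w hw w' hw' hww'
  rcases mem_edgeNbhd_sdiff_pair.mp hw with ⟨huw, hwv⟩ | ⟨hvw, hwu⟩
  · exact disjoint_edgeChildren_of_adj hg huv huw hwv hw' hww'
  · rw [Function.onFun, edgeChildren_comm, edgeChildren_comm (u := u)]
    rw [Finset.mem_coe, edgeNbhd_comm, Finset.pair_comm] at hw'
    exact disjoint_edgeChildren_of_adj hg huv.symm hvw hwu hw' hww'

lemma card_edgeNbhd_inter_add_sum_card_edgeChildren_inter_le (hg : 6 ≤ G.egirth)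
    (huv : G.Adj u v) (P : Finset V) :
    #(G.edgeNbhd u v ∩ P) + ∑ w ∈ G.edgeNbhd u v \ {u, v}, #(G.edgeChildren u v w ∩ P) ≤
      #P := by
  have hdisj : (↑(G.edgeNbhd u v \ {u, v}) : Set V).PairwiseDisjoint
      fun w => G.edgeChildren u v w ∩ P :=
    (pairwiseDisjoint_edgeChildren hg huv).mono fun _ => Finset.inter_subset_left
  rw [← card_biUnion hdisj, ← card_union_of_disjoint]
  · exact Finset.card_le_card (Finset.union_subset Finset.inter_subset_right
      (Finset.biUnion_subset.mpr fun _ _ => Finset.inter_subset_right))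
  · refine (Finset.disjoint_biUnion_right _ _ _).mpr fun w _ => ?_
    exact (Finset.sdiff_disjoint.symm.mono Finset.inter_subset_left Finset.inter_subset_left)

lemma two_add_sum_degree_le_card (hg : 6 ≤ G.egirth) (huv : G.Adj u v) :
    2 + ∑ w ∈ G.edgeNbhd u v \ {u, v}, G.degree w ≤ Fintype.card V := by
  have hcount := card_edgeNbhd_inter_add_sum_card_edgeChildren_inter_le hg huv univ
  have hpair := card_edgeNbhd_sdiff_inter_add_two huv (mem_univ u) (mem_univ v)
  simp only [Finset.inter_univ, card_univ] at hcount hpair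
  rw [← sum_congr rfl fun w hw => card_edgeChildren_add_one (le_trans (by norm_num) hg) huv hw,
    sum_add_distrib, sum_const, smul_eq_mul, mul_one]
  omega

-- `R` is the set of thin vertices, of degree `r`; the vertices of `Rᶜ` are the fat ones.
variable {r : ℕ} {R : Finset V}

lemma sum_degree_eq_of_biregular (hR : ∀ v ∈ R, G.degree v = r)
    (hRc : ∀ v ∉ R, G.degree v = r + 1) (s : Finset V) :
    ∑ w ∈ s, G.degree w = r * #s + #(s ∩ Rᶜ) := by
  have hdeg : ∀ w, G.degree w = r + if w ∈ Rᶜ then 1 else 0 := fun w => by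
    by_cases hw : w ∈ R
    · simp [hw, hR w hw]
    · simp [hw, hRc w hw]
  simp only [hdeg, sum_add_distrib, sum_const, smul_eq_mul, sum_boole, Nat.cast_id,
    filter_mem_eq_inter, mul_comm]

lemma sum_card_neighborFinset_inter_compl_add (hR : ∀ v ∈ R, G.degree v = r)
    (hRc : ∀ v ∉ R, G.degree v = r + 1) :
    ∑ v ∈ Rᶜ, #(G.neighborFinset v ∩ Rᶜ) + r * #R =
      ∑ v ∈ R, #(G.neighborFinset v ∩ R) + (r + 1) * #Rᶜ := by
  have := sum_degree_compl_add_sum_card_neighborFinset_inter (G := G) R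
  simp only [sum_degree_eq_of_biregular hR hRc, Finset.inter_compl, Finset.inter_self,
    Finset.card_empty] at this
  linarith

lemma even_card_of_biregular (hR : ∀ v ∈ R, G.degree v = r)
    (hRc : ∀ v ∉ R, G.degree v = r + 1) (hcard : #Rᶜ = #R) : Even #R := by
  have hsum := G.sum_degrees_eq_twice_card_edges
  rw [← sum_add_sum_compl R, sum_degree_eq_of_biregular hR hRc,
    sum_degree_eq_of_biregular hR hRc, Finset.inter_compl, Finset.inter_self, hcard] at hsum
  have hodd : ¬ Even (2 * r + 1) := by simp
  refine (Nat.even_mul.mp ⟨#G.edgeFinset, ?_⟩).resolve_left hodd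
  simp only [Finset.card_empty] at hsum
  linarith

lemma two_mul_sq_add_card_edgeNbhd_inter_compl_le (hg : 6 ≤ G.egirth) (huv : G.Adj u v)
    (hR : ∀ v ∈ R, G.degree v = r) (hRc : ∀ v ∉ R, G.degree v = r + 1) (hu : u ∉ R)
    (hv : v ∉ R) : 2 * r ^ 2 + #(G.edgeNbhd u v ∩ Rᶜ) ≤ Fintype.card V := by
  have hmoore := two_add_sum_degree_le_card hg huv
  have hX := card_edgeNbhd (le_trans (by norm_num) hg) huv
  have hD := card_edgeNbhd_sdiff_inter_add_two huv (mem_univ u) (mem_univ v)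
  have hDfat := card_edgeNbhd_sdiff_inter_add_two huv (mem_compl.mpr hu) (mem_compl.mpr hv)
  rw [sum_degree_eq_of_biregular hR hRc] at hmoore
  rw [Finset.inter_univ, Finset.inter_univ, hX, hRc u hu, hRc v hv] at hD
  rw [show #(G.edgeNbhd u v \ {u, v}) = 2 * r by omega] at hmoore
  nlinarith

lemma two_mul_pred_mul_card_edgeNbhd_inter_add_le (hg : 6 ≤ G.egirth) (huv : G.Adj u v)
    (hR : ∀ v ∈ R, G.degree v = r) (hu : u ∉ R) (hv : v ∉ R) :
    2 * ((r - 1) * #(G.edgeNbhd u v ∩ R)) + 2 * #(G.edgeNbhd u v ∩ Rᶜ) ≤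
      ∑ v ∈ R, #(G.neighborFinset v ∩ R) + 2 * #Rᶜ := by
  set X := G.edgeNbhd u v
  set C := G.edgeChildren u v
  have hXR : X ∩ R ⊆ X \ {u, v} := fun w hw => by
    rw [Finset.mem_inter] at hw
    simp only [Finset.mem_sdiff, Finset.mem_insert, Finset.mem_singleton, hw.1, true_and]
    rintro (rfl | rfl) <;> simp_all
  have hchildren : ∀ w ∈ X ∩ R, #(C w ∩ R) + #(C w ∩ Rᶜ) = r - 1 := fun w hw => by
    have : #(C w) + 1 = G.degree w :=
      card_edgeChildren_add_one (le_trans (by norm_num) hg) huv (hXR hw)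
    rw [hR w (Finset.mem_inter.mp hw).2] at this
    rw [Finset.card_inter_add_card_inter_compl]
    omega
  have hthin : 2 * ∑ w ∈ X ∩ R, #(C w ∩ R) ≤ ∑ v ∈ R, #(G.neighborFinset v ∩ R) := by
    have hC : ∀ w, C w ∩ R = G.neighborFinset w ∩ (R \ X) := fun w => by
      ext x; simp only [C, edgeChildren, Finset.mem_inter, Finset.mem_sdiff]; tauto
    simp only [hC]
    exact two_mul_sum_card_neighborFinset_inter_le_of_disjoint Finset.inter_subset_right
      Finset.sdiff_subset (Finset.disjoint_sdiff.mono_left Finset.inter_subset_left)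
  have hfat : ∑ w ∈ X ∩ R, #(C w ∩ Rᶜ) + #(X ∩ Rᶜ) ≤ #Rᶜ :=
    calc ∑ w ∈ X ∩ R, #(C w ∩ Rᶜ) + #(X ∩ Rᶜ)
        ≤ ∑ w ∈ X \ {u, v}, #(C w ∩ Rᶜ) + #(X ∩ Rᶜ) := by gcongr
      _ ≤ #Rᶜ := by
        rw [add_comm]; exact card_edgeNbhd_inter_add_sum_card_edgeChildren_inter_le hg huv _
  have hsplit : (r - 1) * #(X ∩ R) = ∑ w ∈ X ∩ R, #(C w ∩ R) + ∑ w ∈ X ∩ R, #(C w ∩ Rᶜ) := by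
    rw [← sum_add_distrib, sum_congr rfl hchildren, sum_const, smul_eq_mul, mul_comm]
  omega

lemma card_neighborFinset_inter_compl_add_le_four (hg : 6 ≤ G.egirth)
    (hR : ∀ v ∈ R, G.degree v = r) (hRc : ∀ v ∉ R, G.degree v = r + 1)
    (hcard : Fintype.card V ≤ 2 * r ^ 2 + 4) :
    ∀ u ∈ Rᶜ, ∀ v ∈ Rᶜ, G.Adj u v →
      #(G.neighborFinset u ∩ Rᶜ) + #(G.neighborFinset v ∩ Rᶜ) ≤ 4 := by
  intro u hu v hv huv
  have := two_mul_sq_add_card_edgeNbhd_inter_compl_le hg huv hR hRc (Finset.mem_compl.mp hu)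
    (Finset.mem_compl.mp hv)
  rw [card_edgeNbhd_inter (le_trans (by norm_num) hg) huv] at this
  omega

lemma sum_card_neighborFinset_inter_le_card (hR : ∀ v ∈ R, G.degree v = r)
    (hRc : ∀ v ∉ R, G.degree v = r + 1) (hcard : #Rᶜ = #R)
    (hfat : ∀ u ∈ Rᶜ, ∀ v ∈ Rᶜ, G.Adj u v →
      #(G.neighborFinset u ∩ Rᶜ) + #(G.neighborFinset v ∩ Rᶜ) ≤ 4) :
    ∑ v ∈ R, #(G.neighborFinset v ∩ R) ≤ #R := by
  have hfatEdges := two_mul_sum_card_neighborFinset_inter_le Rᶜ 4 hfat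
  have hid := sum_card_neighborFinset_inter_compl_add hR hRc
  rw [hcard] at hfatEdges hid
  linarith

lemma exists_adj_notMem (hR : ∀ v ∈ R, G.degree v = r)
    (hRc : ∀ v ∉ R, G.degree v = r + 1) (hcard : #Rᶜ = #R) (hne : R.Nonempty) :
    ∃ u ∉ R, ∃ v ∉ R, G.Adj u v := by
  have hid := sum_card_neighborFinset_inter_compl_add hR hRc
  rw [hcard] at hid
  have hpos : ∑ v ∈ Rᶜ, #(G.neighborFinset v ∩ Rᶜ) ≠ 0 := by
    have := hne.card_pos
    rw [add_mul, one_mul] at hid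
    omega
  obtain ⟨u, hu, hu'⟩ := exists_ne_zero_of_sum_ne_zero hpos
  obtain ⟨v, hv⟩ := card_ne_zero.mp hu'
  rw [Finset.mem_inter, mem_neighborFinset, Finset.mem_compl] at hv
  exact ⟨u, Finset.mem_compl.mp hu, v, hv.2, hv.1⟩

end Finite

end SimpleGraph

lemma deg_eq_degree {V : Type*} [Fintype V] (G : SimpleGraph V) [DecidableRel G.Adj] (v : V) :
    deg G v = G.degree v := by
  rw [deg, degree, neighborFinset, Set.ncard_eq_toFinset_card']

lemma IsBabi.exists_biregular_partition {V : Type*} [Fintype V] [DecidableEq V]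
    {G : SimpleGraph V} [DecidableRel G.Adj] {r g : ℕ} (h : IsBabi r (r + 1) g G) :
    ∃ R : Finset V, R.Nonempty ∧ (∀ v ∈ R, G.degree v = r) ∧
      (∀ v ∉ R, G.degree v = r + 1) ∧ #Rᶜ = #R := by
  obtain ⟨-, hdeg, ⟨v, hv⟩, -, hbal⟩ := h
  simp only [deg_eq_degree] at hdeg hv hbal
  refine ⟨univ.filter (G.degree · = r), ⟨v, by simpa using hv⟩, by simp, fun w hw => ?_, ?_⟩
  · simpa using (hdeg w).resolve_left (by simpa using hw)
  · rw [← Set.ncard_coe_finset, ← Set.ncard_coe_finset]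
    convert hbal.symm using 2 <;> ext w
    · rcases hdeg w with hw | hw <;> simp [hw]
    · simp

/-- for even `r ≥ 8`, every `(r,r+1;6)`-babi-graph has order at
least `2(r² + 4)`. -/
theorem stmt_18 (r : ℕ) (hr : 8 ≤ r) (hre : Even r)
    (n : ℕ) (G : SimpleGraph (Fin n)) (h : IsBabi r (r + 1) 6 G) :
    2 * (r ^ 2 + 4) ≤ n := by
  classical
  obtain ⟨R, hne, hR, hRc, hcard⟩ := h.exists_biregular_partition
  have hg : 6 ≤ G.egirth := (egirth_eq_of_girth_eq (by norm_num) h.1).ge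
  have hg4 : 4 ≤ G.egirth := le_trans (by norm_num) hg
  have hn : n = 2 * #R := by
    have := card_add_card_compl R
    rw [hcard, Fintype.card_fin] at this
    omega
  by_contra! hlt
  have hRle : #R ≤ r ^ 2 + 2 := by
    obtain ⟨k, hk⟩ := even_card_of_biregular hR hRc hcard
    obtain ⟨j, rfl⟩ := hre
    have : (j + j) ^ 2 = 4 * (j * j) := by ring
    omega
  have hfat := card_neighborFinset_inter_compl_add_le_four hg hR hRc
    (by rw [Fintype.card_fin]; omega)
  have hq := sum_card_neighborFinset_inter_le_card hR hRc hcard hfat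
  obtain ⟨u, hu, v, hv, huv⟩ := exists_adj_notMem hR hRc hcard hne
  have hthin := two_mul_pred_mul_card_edgeNbhd_inter_add_le hg huv hR hu hv
  have hsize := card_inter_add_card_inter_compl (G.edgeNbhd u v) R
  rw [card_edgeNbhd hg4 huv, hRc u hu, hRc v hv] at hsize
  have hX4 := hfat u (Finset.mem_compl.mpr hu) v (Finset.mem_compl.mpr hv) huv
  rw [← card_edgeNbhd_inter hg4 huv] at hX4
  obtain ⟨t, rfl⟩ : ∃ t, r = t + 2 := ⟨r - 2, by omega⟩
  rw [show t + 2 - 1 = t + 1 by omega, hcard] at hthin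
  nlinarith [Nat.mul_le_mul_right t hX4]
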